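/- arXiv:2310.13190 — 2 statements merged into one kernel-verified Lean document; each statement's English description precedes it below -/
import Mathlib

section
/- Let q ≥ 1 be an integer and let C = v_1, e_1, v_2, …, v_s, e_s, v_1 be a graph cycle. Let I be a nonempty independent subset of V(C) (no two vertices of I are consecutive on C) and let B be a nonempty subset of E(C) such that for every v_i ∈ I and every e_j ∈ B, the distance on C from v_i to the set {v_j, v_{j+1}} is at least q. Then s ≥ 2|I| + |B| + 2(q−1). -/
/-- The cyclic distance between two positions `i, j` on a cycle of length `s`
(positions indexed by `ZMod s`): `min (|i−j|, s−|i−j|)`. -/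
def cycDist {s : ℕ} (i j : ZMod s) : ℕ := min (i - j).val (j - i).val

/-- Let `q ≥ 1` and let `C = v_1, e_1, …, v_s, e_s, v_1` be a graph
cycle (modelled by an injective map `v : ZMod s → α` listing its distinct vertices in
cyclic order, the edge `e_j = v_j v_{j+1}` being labelled by the position `j`). Let `I`
be a nonempty independent set of vertex positions (no two consecutive on `C`) and `B` a
nonempty set of edge positions such that the distance on `C` from `v_i` to `{v_j, v_{j+1}}`
is at least `q` for every `i ∈ I` and `e_j ∈ B`. Then `s ≥ 2|I| + |B| + 2(q−1)`. -/
theorem statement12 {α : Type*} (q s : ℕ) (hq : 1 ≤ q) (hs : 3 ≤ s)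
    (v : ZMod s → α) (hv : Function.Injective v)
    (I B : Finset (ZMod s)) (hI : I.Nonempty) (hB : B.Nonempty)
    (hind : ∀ i ∈ I, i + 1 ∉ I)
    (hdist : ∀ i ∈ I, ∀ j ∈ B, q ≤ min (cycDist i j) (cycDist i (j + 1))) :
    2 * I.card + B.card + 2 * (q - 1) ≤ s := by
  haveI : NeZero s := ⟨by omega⟩
  have vcast : ∀ k : ℕ, k < s → ((k : ZMod s)).val = k := fun k hk => ZMod.val_natCast_of_lt hk
  have vrefl : ∀ a : ZMod s, ((a.val : ℕ) : ZMod s) = a := fun a => ZMod.natCast_rightInverse a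
  have vsub : ∀ (a : ZMod s) (k : ℕ), k ≤ a.val → (a - (k : ZMod s)).val = a.val - k := by
    intro a k hk
    have h1 : a - (k : ZMod s) = ((a.val - k : ℕ) : ZMod s) := by
      rw [Nat.cast_sub hk, vrefl]
    rw [h1, vcast _ (by have := ZMod.val_lt a; omega)]
  have key : ∀ i ∈ I, ∀ j ∈ B, q ≤ (j - i).val ∧ q ≤ (i - j).val ∧
      q ≤ (j + 1 - i).val ∧ q ≤ (i - (j + 1)).val := by
    intro i hi j hj
    have h := hdist i hi j hj
    simp only [cycDist, le_min_iff] at h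
    exact ⟨h.1.2, h.1.1, h.2.2, h.2.1⟩
  obtain ⟨iw, hiw⟩ := hI
  obtain ⟨jw, hjw⟩ := hB
  -- s ≥ 2q
  have hsq : 2 * q ≤ s := by
    have hk := key iw hiw jw hjw
    have hne : jw - iw ≠ 0 := by
      intro h
      rw [h, ZMod.val_zero] at hk
      omega
    have hneg : (iw - jw) = -(jw - iw) := by ring
    have hval : (iw - jw).val = s - (jw - iw).val := by
      rw [hneg, ZMod.neg_val]; simp [hne]
    have hlt := ZMod.val_lt (jw - iw)
    omega
  -- minimizing pairs
  obtain ⟨⟨i0, j0⟩, hmem0, hmin0⟩ := Finset.exists_min_image (I ×ˢ B)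
    (fun p => (p.2 - p.1).val) ⟨(iw, jw), Finset.mem_product.2 ⟨hiw, hjw⟩⟩
  have hi0 : i0 ∈ I := (Finset.mem_product.1 hmem0).1
  have hj0 : j0 ∈ B := (Finset.mem_product.1 hmem0).2
  have hmin0' : ∀ i ∈ I, ∀ j ∈ B, (j0 - i0).val ≤ (j - i).val := by
    intro i hi j hj
    exact hmin0 (i, j) (Finset.mem_product.2 ⟨hi, hj⟩)
  obtain ⟨⟨j1, i1⟩, hmem1, hmin1⟩ := Finset.exists_min_image (B ×ˢ I)
    (fun p => (p.2 - p.1).val) ⟨(jw, iw), Finset.mem_product.2 ⟨hjw, hiw⟩⟩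
  have hj1 : j1 ∈ B := (Finset.mem_product.1 hmem1).1
  have hi1 : i1 ∈ I := (Finset.mem_product.1 hmem1).2
  have hmin1' : ∀ j ∈ B, ∀ i ∈ I, (i1 - j1).val ≤ (i - j).val := by
    intro j hj i hi
    exact hmin1 (j, i) (Finset.mem_product.2 ⟨hj, hi⟩)
  have d0q : q ≤ (j0 - i0).val := (key i0 hi0 j0 hj0).1
  have d1q : q + 1 ≤ (i1 - j1).val := by
    have h4 := (key i1 hi1 j1 hj1).2.2.2
    have h2 := (key i1 hi1 j1 hj1).2.1
    have e : i1 - (j1 + 1) = (i1 - j1) - ((1 : ℕ) : ZMod s) := by push_cast; ring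
    rw [e, vsub _ 1 (by omega)] at h4
    omega
  -- the pieces
  set A2 : Finset (ZMod s) := I.image (· + 1) with hA2def
  set A3 : Finset (ZMod s) := B.image (· + 1) with hA3def
  set P : Finset (ZMod s) := (Finset.range (q - 1)).image (fun k : ℕ => j0 - (k : ZMod s))
    with hPdef
  set Q : Finset (ZMod s) := (Finset.range (q - 1)).image (fun t : ℕ => j1 + ((t : ZMod s) + 2))
    with hQdef
  -- disjointness: P against I, I+1, B+1
  have dPI : ∀ k < q - 1, j0 - (k : ZMod s) ∉ I := by
    intro k hk hmemI
    have h := (key _ hmemI j0 hj0).1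
    rw [sub_sub_cancel, vcast k (by omega)] at h
    omega
  have dPA2 : ∀ k < q - 1, ∀ i ∈ I, i + 1 ≠ j0 - (k : ZMod s) := by
    intro k hk i hi heq
    have e : j0 - i = ((k + 1 : ℕ) : ZMod s) := by push_cast; linear_combination - heq
    have h := (key i hi j0 hj0).1
    rw [e, vcast _ (by omega)] at h
    omega
  have dPA3 : ∀ k < q - 1, ∀ j ∈ B, j + 1 ≠ j0 - (k : ZMod s) := by
    intro k hk j hj heq
    have e : j - i0 = (j0 - i0) - ((k + 1 : ℕ) : ZMod s) := by push_cast; linear_combination heq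
    have hv' : (j - i0).val = (j0 - i0).val - (k + 1) := by
      rw [e]; exact vsub _ _ (by omega)
    have hd := hmin0' i0 hi0 j hj
    omega
  -- disjointness: Q against I, I+1, B+1
  have dQI : ∀ t < q - 1, j1 + ((t : ZMod s) + 2) ∉ I := by
    intro t ht hmemI
    have h := (key _ hmemI j1 hj1).2.2.2
    have e : j1 + ((t : ZMod s) + 2) - (j1 + 1) = ((t + 1 : ℕ) : ZMod s) := by push_cast; ring
    rw [e, vcast _ (by omega)] at h
    omega
  have dQA2 : ∀ t < q - 1, ∀ i ∈ I, i + 1 ≠ j1 + ((t : ZMod s) + 2) := by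
    intro t ht i hi heq
    have h := (key i hi j1 hj1).2.2.2
    have e : i - (j1 + 1) = ((t : ℕ) : ZMod s) := by push_cast; linear_combination heq
    rw [e, vcast _ (by omega)] at h
    omega
  have dQA3 : ∀ t < q - 1, ∀ j ∈ B, j + 1 ≠ j1 + ((t : ZMod s) + 2) := by
    intro t ht j hj heq
    have e : i1 - j = (i1 - j1) - ((t + 1 : ℕ) : ZMod s) := by push_cast; linear_combination - heq
    have hv' : (i1 - j).val = (i1 - j1).val - (t + 1) := by
      rw [e]; exact vsub _ _ (by omega)
    have hd := hmin1' j hj i1 hi1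
    omega
  -- disjointness of P and Q
  have dPQ : ∀ k < q - 1, ∀ t < q - 1, j0 - (k : ZMod s) ≠ j1 + ((t : ZMod s) + 2) := by
    intro k hk t ht heq
    have e0 : j0 - j1 = ((k + t + 2 : ℕ) : ZMod s) := by push_cast; linear_combination heq
    rcases le_or_gt (k + t + 2) (i1 - j1).val with hc | hc
    · have e : i1 - j0 = (i1 - j1) - ((k + t + 2 : ℕ) : ZMod s) := by linear_combination - e0
      have hv' : (i1 - j0).val = (i1 - j1).val - (k + t + 2) := by
        rw [e]; exact vsub _ _ hc
      have hd := hmin1' j0 hj0 i1 hi1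
      omega
    · have e : j0 - i1 = ((k + t + 2 - (i1 - j1).val : ℕ) : ZMod s) := by
        rw [Nat.cast_sub hc.le, vrefl]
        linear_combination e0
      have hv' : (j0 - i1).val = k + t + 2 - (i1 - j1).val := by
        rw [e]; exact vcast _ (by omega)
      have hd := hmin0' i1 hi1 j0 hj0
      omega
  -- basic disjointness
  have d12 : Disjoint I A2 := by
    rw [Finset.disjoint_left]
    intro a ha ha2
    obtain ⟨i, hi, rfl⟩ := Finset.mem_image.1 ha2
    exact hind i hi ha
  have d13 : Disjoint I A3 := by
    rw [Finset.disjoint_left]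
    intro a ha ha3
    obtain ⟨j, hj, rfl⟩ := Finset.mem_image.1 ha3
    have h := (key _ ha j hj).2.2.2
    simp [ZMod.val_zero] at h
    omega
  have d23 : Disjoint A2 A3 := by
    rw [Finset.disjoint_left]
    intro a ha2 ha3
    obtain ⟨i, hi, rfl⟩ := Finset.mem_image.1 ha2
    obtain ⟨j, hj, hji⟩ := Finset.mem_image.1 ha3
    have hij : j = i := add_right_cancel hji
    rw [hij] at hj
    have h := (key i hi i hj).1
    simp [ZMod.val_zero] at h
    omega
  have d1P : Disjoint I P := by
    rw [Finset.disjoint_left]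
    intro a ha haP
    obtain ⟨k, hk, rfl⟩ := Finset.mem_image.1 haP
    exact dPI k (Finset.mem_range.1 hk) ha
  have d2P : Disjoint A2 P := by
    rw [Finset.disjoint_left]
    intro a ha2 haP
    obtain ⟨i, hi, rfl⟩ := Finset.mem_image.1 ha2
    obtain ⟨k, hk, hke⟩ := Finset.mem_image.1 haP
    exact dPA2 k (Finset.mem_range.1 hk) i hi hke.symm
  have d3P : Disjoint A3 P := by
    rw [Finset.disjoint_left]
    intro a ha3 haP
    obtain ⟨j, hj, rfl⟩ := Finset.mem_image.1 ha3
    obtain ⟨k, hk, hke⟩ := Finset.mem_image.1 haP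
    exact dPA3 k (Finset.mem_range.1 hk) j hj hke.symm
  have d1Q : Disjoint I Q := by
    rw [Finset.disjoint_left]
    intro a ha haQ
    obtain ⟨t, ht, rfl⟩ := Finset.mem_image.1 haQ
    exact dQI t (Finset.mem_range.1 ht) ha
  have d2Q : Disjoint A2 Q := by
    rw [Finset.disjoint_left]
    intro a ha2 haQ
    obtain ⟨i, hi, rfl⟩ := Finset.mem_image.1 ha2
    obtain ⟨t, ht, hte⟩ := Finset.mem_image.1 haQ
    exact dQA2 t (Finset.mem_range.1 ht) i hi hte.symm
  have d3Q : Disjoint A3 Q := by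
    rw [Finset.disjoint_left]
    intro a ha3 haQ
    obtain ⟨j, hj, rfl⟩ := Finset.mem_image.1 ha3
    obtain ⟨t, ht, hte⟩ := Finset.mem_image.1 haQ
    exact dQA3 t (Finset.mem_range.1 ht) j hj hte.symm
  have dPQ' : Disjoint P Q := by
    rw [Finset.disjoint_left]
    intro a haP haQ
    obtain ⟨k, hk, rfl⟩ := Finset.mem_image.1 haP
    obtain ⟨t, ht, hte⟩ := Finset.mem_image.1 haQ
    exact dPQ k (Finset.mem_range.1 hk) t (Finset.mem_range.1 ht) hte.symm
  -- cardinalities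
  have cardA2 : A2.card = I.card := Finset.card_image_of_injective _ (add_left_injective 1)
  have cardA3 : A3.card = B.card := Finset.card_image_of_injective _ (add_left_injective 1)
  have cardP : P.card = q - 1 := by
    rw [hPdef, Finset.card_image_of_injOn, Finset.card_range]
    intro a ha b hb hab
    have haa := Finset.mem_range.1 ha
    have hbb := Finset.mem_range.1 hb
    have e : (a : ZMod s) = (b : ZMod s) := by
      simp only at hab
      linear_combination - hab
    have := congrArg ZMod.val e
    rwa [vcast _ (by omega), vcast _ (by omega)] at this
  have cardQ : Q.card = q - 1 := by
    rw [hQdef, Finset.card_image_of_injOn, Finset.card_range]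
    intro a ha b hb hab
    have haa := Finset.mem_range.1 ha
    have hbb := Finset.mem_range.1 hb
    have e : (a : ZMod s) = (b : ZMod s) := by
      simp only at hab
      linear_combination hab
    have := congrArg ZMod.val e
    rwa [vcast _ (by omega), vcast _ (by omega)] at this
  -- assemble
  have dU3 : Disjoint (I ∪ A2) A3 := by
    rw [Finset.disjoint_union_left]; exact ⟨d13, d23⟩
  have dUP : Disjoint ((I ∪ A2) ∪ A3) P := by
    rw [Finset.disjoint_union_left, Finset.disjoint_union_left]
    exact ⟨⟨d1P, d2P⟩, d3P⟩
  have dUQ : Disjoint (((I ∪ A2) ∪ A3) ∪ P) Q := by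
    rw [Finset.disjoint_union_left, Finset.disjoint_union_left, Finset.disjoint_union_left]
    exact ⟨⟨⟨d1Q, d2Q⟩, d3Q⟩, dPQ'⟩
  have hcard : ((((I ∪ A2) ∪ A3) ∪ P) ∪ Q).card
      = 2 * I.card + B.card + (q - 1) + (q - 1) := by
    rw [Finset.card_union_of_disjoint dUQ, Finset.card_union_of_disjoint dUP,
      Finset.card_union_of_disjoint dU3, Finset.card_union_of_disjoint d12,
      cardA2, cardA3, cardP, cardQ]
    ring
  have hle : ((((I ∪ A2) ∪ A3) ∪ P) ∪ Q).card ≤ s := by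
    have := Finset.card_le_univ ((((I ∪ A2) ∪ A3) ∪ P) ∪ Q)
    rwa [ZMod.card] at this
  omega
end

section
/- Let H be an r-uniform hypergraph and let (C,P) be a lollipop in H whose cycle C = v_1, e_1, v_2, …, v_c, e_c, v_1 is a longest Berge cycle of H (a 1-good lollipop). Write P = u_0, f_0, u_1, …, f_{ℓ−1}, u_ℓ with u_0 = v_c if (C,P) is an o-lollipop, and P = f_0, u_1, …, f_{ℓ−1}, u_ℓ with f_0 = e_c if (C,P) is a p-lollipop, and let H' be the subhypergraph with E(H') = E(H) − E(C) − E(P). Then for all 1 ≤ q ≤ ℓ−1 and 1 ≤ i, j ≤ c: (i) if u_q ∈ e_i and u_ℓ ∈ e_j, then j = i or |j − i| ≥ ℓ − q + 1; (ii) if {v_i, u_q} ⊆ e for some edge e ∈ (E(H') ∪ {f_0}) − E(C) and u_ℓ ∈ e_j, then either j > i and j − i ≥ ℓ − q + 1, or i > j and i − j ≥ ℓ − q + 2; (iii) if there exist distinct edges e, f ∈ (E(H') ∪ {f_0}) − E(C) with {v_i, u_q} ⊆ e and {v_j, u_ℓ} ⊆ f, then j = i or |j − i| ≥ ℓ − q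 + 2. -/
/-!
The vertices `u_q, …, u_ℓ` of the lollipop path form a Berge path off `C`. If it could be
attached to `C` near `v_i` and near `v_j` with `|j - i|` smaller than claimed, the arc of `C`
between the two attachment points could be replaced by the detour through this path, giving a
Berge cycle longer than `C`. The three claims differ only in how the detour is closed up: through
the cycle edges `e_i`, `e_j`, which then leave the remaining arc, or through edges outside `C`
and the path. The case `j < i` reduces to `i < j` by traversing `C` backwards.
-/

/-- A hypergraph on vertex type `α`: a finite vertex set together with a family of
distinct subsets of it, called edges. -/
structure BHypergraph (α : Type*) [DecidableEq α] where
  verts : Finset α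
  edges : Finset (Finset α)
  edge_sub : ∀ e ∈ edges, e ⊆ verts

/-- A simple graph is 2-connected if it has at least 3 vertices, is connected, and
remains connected after deleting any single vertex. -/
def IsTwoConnectedGraph {V : Type*} (G : SimpleGraph V) : Prop :=
  3 ≤ Nat.card V ∧ G.Connected ∧
    ∀ x : V, ((⊤ : G.Subgraph).deleteVerts {x}).coe.Connected

namespace BHypergraph

variable {α : Type*} [DecidableEq α]

/-- `H` is `r`-uniform: each edge has exactly `r` vertices. -/
def Uniform (H : BHypergraph α) (r : ℕ) : Prop := ∀ e ∈ H.edges, e.card = r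

/-- The degree of a vertex: the number of edges containing it. -/
def degree (H : BHypergraph α) (v : α) : ℕ := (H.edges.filter (fun e => v ∈ e)).card

/-- The minimum degree of `H` is at least `k`. -/
def MinDegreeGE (H : BHypergraph α) (k : ℕ) : Prop := ∀ v ∈ H.verts, k ≤ H.degree v

/-- The vertex type of the incidence graph of `H`: vertices of `H` together with
edges of `H`. -/
def IncVert (H : BHypergraph α) : Type _ :=
  {x : α ⊕ Finset α // Sum.elim (fun v => v ∈ H.verts) (fun e => e ∈ H.edges) x}

/-- The incidence (bipartite) graph of `H`: `v ∈ V(H)` is adjacent to `e ∈ E(H)`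
iff `v ∈ e`. -/
def incidenceGraph (H : BHypergraph α) : SimpleGraph (IncVert H) where
  Adj x y := (∃ v e, x.1 = Sum.inl v ∧ y.1 = Sum.inr e ∧ v ∈ e) ∨
             (∃ v e, y.1 = Sum.inl v ∧ x.1 = Sum.inr e ∧ v ∈ e)
  symm := ⟨fun _ _ h => h.elim Or.inr Or.inl⟩
  loopless := ⟨by
    rintro x (⟨v, e, h1, h2, _⟩ | ⟨v, e, h1, h2, _⟩) <;> rw [h1] at h2 <;> simp at h2⟩

/-- `H` is 2-connected iff its incidence graph is a 2-connected graph. -/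
def TwoConnected (H : BHypergraph α) : Prop := IsTwoConnectedGraph H.incidenceGraph

/-- `H` contains a Berge cycle of length `c`: `c` distinct vertices `v_1, …, v_c` and
`c` distinct edges `e_1, …, e_c` with `{v_i, v_{i+1}} ⊆ e_i` (indices mod `c`). -/
def HasBergeCycle (H : BHypergraph α) (c : ℕ) : Prop :=
  2 ≤ c ∧ ∃ (v : ZMod c → α) (e : ZMod c → Finset α),
    Function.Injective v ∧ Function.Injective e ∧
    (∀ i, e i ∈ H.edges) ∧ (∀ i, v i ∈ e i) ∧ (∀ i, v (i + 1) ∈ e i)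

end BHypergraph

open BHypergraph

variable {α : Type*} [DecidableEq α]

/-- A Berge cycle of length `c` in `H`, with defining vertices `v i` and edges `e i`
indexed cyclically by `ZMod c`; edge `e i` contains `v i` and `v (i+1)`. -/
structure BergeCycle (H : BHypergraph α) (c : ℕ) where
  hc : 2 ≤ c
  v : ZMod c → α
  e : ZMod c → Finset α
  v_inj : Function.Injective v
  e_inj : Function.Injective e
  e_mem : ∀ i, e i ∈ H.edges
  mem_self : ∀ i, v i ∈ e i
  mem_succ : ∀ i, v (i + 1) ∈ e i

/-- The set of defining vertices of a Berge cycle. -/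
def BergeCycle.vset {H : BHypergraph α} {c : ℕ} (C : BergeCycle H c) : Finset α :=
  letI : NeZero c := ⟨by have h := C.hc; omega⟩
  Finset.image C.v Finset.univ

/-- The set of edges of a Berge cycle. -/
def BergeCycle.eset {H : BHypergraph α} {c : ℕ} (C : BergeCycle H c) : Finset (Finset α) :=
  letI : NeZero c := ⟨by have h := C.hc; omega⟩
  Finset.image C.e Finset.univ

/-- A Berge path `u 0, f 0, u 1, …, f (ℓ-1), u ℓ` in `H` with `ℓ` edges:
distinct vertices, distinct edges, and `{u i, u (i+1)} ⊆ f i`. -/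
structure BergePath (H : BHypergraph α) (ℓ : ℕ) where
  u : Fin (ℓ + 1) → α
  f : Fin ℓ → Finset α
  u_inj : Function.Injective u
  f_inj : Function.Injective f
  u_mem : ∀ i, u i ∈ H.verts
  f_mem : ∀ i, f i ∈ H.edges
  mem_cast : ∀ i : Fin ℓ, u i.castSucc ∈ f i
  mem_succ : ∀ i : Fin ℓ, u i.succ ∈ f i

def BergePath.vset {H : BHypergraph α} {ℓ : ℕ} (P : BergePath H ℓ) : Finset α :=
  Finset.image P.u Finset.univ

def BergePath.eset {H : BHypergraph α} {ℓ : ℕ} (P : BergePath H ℓ) : Finset (Finset α) :=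
  Finset.image P.f Finset.univ

/-- A partial Berge path `f_0, u_1, f_1, …, f_(ℓ-1), u_ℓ`, beginning with an edge:
here `u i` denotes the vertex `u_(i+1)` and `f i` denotes the edge `f_i`, so that
`u_1 ∈ f_0` and `{u_i, u_(i+1)} ⊆ f_i` for `1 ≤ i ≤ ℓ-1`. -/
structure PartialBergePath (H : BHypergraph α) (ℓ : ℕ) where
  u : Fin ℓ → α
  f : Fin ℓ → Finset α
  u_inj : Function.Injective u
  f_inj : Function.Injective f
  u_mem : ∀ i, u i ∈ H.verts
  f_mem : ∀ i, f i ∈ H.edges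
  mem_self : ∀ i : Fin ℓ, u i ∈ f i
  mem_next : ∀ (i : ℕ) (h : i + 1 < ℓ), u ⟨i, by omega⟩ ∈ f ⟨i + 1, h⟩

def PartialBergePath.vset {H : BHypergraph α} {ℓ : ℕ} (P : PartialBergePath H ℓ) : Finset α :=
  Finset.image P.u Finset.univ

def PartialBergePath.eset {H : BHypergraph α} {ℓ : ℕ} (P : PartialBergePath H ℓ) :
    Finset (Finset α) :=
  Finset.image P.f Finset.univ

/-- An ordinary lollipop (o-lollipop): a Berge cycle `C` together with a Berge path `P`
starting at a vertex of `C`, with `|V(C) ∩ V(P)| = 1` and `E(C) ∩ E(P) = ∅`. -/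
structure OLollipop (H : BHypergraph α) (c ℓ : ℕ) where
  C : BergeCycle H c
  P : BergePath H ℓ
  start_mem : P.u 0 ∈ C.vset
  inter_v : C.vset ∩ P.vset = {P.u 0}
  inter_e : C.eset ∩ P.eset = ∅

/-- A partial lollipop (p-lollipop): a Berge cycle `C` together with a partial Berge
path `P` whose first edge is an edge of `C`, with `V(C) ∩ V(P) = ∅` and
`E(C) ∩ E(P) = {f_0}`. -/
structure PLollipop (H : BHypergraph α) (c ℓ : ℕ) where
  hl : 1 ≤ ℓ
  C : BergeCycle H c
  P : PartialBergePath H ℓ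
  first_edge : P.f ⟨0, hl⟩ ∈ C.eset
  inter_v : C.vset ∩ P.vset = ∅
  inter_e : C.eset ∩ P.eset = {P.f ⟨0, hl⟩}

/-- A lollipop of `H` is either an o-lollipop or a p-lollipop. -/
inductive Lollipop (H : BHypergraph α) : Type _ where
  | o : (c ℓ : ℕ) → OLollipop H c ℓ → Lollipop H
  | p : (c ℓ : ℕ) → PLollipop H c ℓ → Lollipop H

namespace Lollipop

variable {H : BHypergraph α}

/-- The set of defining vertices of the cycle of a lollipop. -/
def cycVset : Lollipop H → Finset α
  | .o _ _ L => L.C.vset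
  | .p _ _ L => L.C.vset

/-- The set of edges of the cycle of a lollipop. -/
def cycEset : Lollipop H → Finset (Finset α)
  | .o _ _ L => L.C.eset
  | .p _ _ L => L.C.eset

/-- The set of vertices of the path of a lollipop. -/
def pathVset : Lollipop H → Finset α
  | .o _ _ L => L.P.vset
  | .p _ _ L => L.P.vset

/-- The set of edges of the path of a lollipop. -/
def pathEset : Lollipop H → Finset (Finset α)
  | .o _ _ L => L.P.eset
  | .p _ _ L => L.P.eset

/-- `|V(P) − V(C)|`. -/
def pGain (L : Lollipop H) : ℕ := (L.pathVset \ L.cycVset).card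

/-- The number of incidences between vertices of `V(P) − V(C)` and edges of
`E(C) − E(P)`, counted with multiplicity. -/
def incCount (L : Lollipop H) : ℕ :=
  ∑ e ∈ (L.cycEset \ L.pathEset), (e ∩ (L.pathVset \ L.cycVset)).card

/-- The number of edges of `E(P) − E(C)` entirely contained in `V(P) − V(C)`. -/
def contCount (L : Lollipop H) : ℕ :=
  ((L.pathEset \ L.cycEset).filter (fun e => e ⊆ L.pathVset \ L.cycVset)).card

/-- 1-good: the cycle is as long as possible among all lollipops. -/
def Good1 (L : Lollipop H) : Prop := ∀ L' : Lollipop H, L'.cycVset.card ≤ L.cycVset.card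

/-- 2-good: lexicographically maximizes `(|V(C)|, |V(P)−V(C)|)`. -/
def Good2 (L : Lollipop H) : Prop :=
  L.Good1 ∧ ∀ L' : Lollipop H, L'.cycVset.card = L.cycVset.card → L'.pGain ≤ L.pGain

/-- 3-good. -/
def Good3 (L : Lollipop H) : Prop :=
  L.Good2 ∧ ∀ L' : Lollipop H, L'.cycVset.card = L.cycVset.card → L'.pGain = L.pGain →
    L'.incCount ≤ L.incCount

/-- 4-good (best). -/
def Good4 (L : Lollipop H) : Prop :=
  L.Good3 ∧ ∀ L' : Lollipop H, L'.cycVset.card = L.cycVset.card → L'.pGain = L.pGain →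
    L'.incCount = L.incCount → L'.contCount ≤ L.contCount

end Lollipop

/-- A disjoint cycle-path pair (dcp-pair): a Berge cycle and a Berge path having no
common edges and such that no defining vertex of the cycle is a vertex of the path. -/
structure DcpPair (H : BHypergraph α) where
  c : ℕ
  l : ℕ
  C : BergeCycle H c
  P : BergePath H l
  disj_v : Disjoint C.vset P.vset
  disj_e : Disjoint C.eset P.eset

namespace DcpPair

variable {H : BHypergraph α}

/-- The number of incidences between vertices of `V(P)` and edges of `E(C)`,
counted with multiplicity. -/
def incCount (D : DcpPair H) : ℕ := ∑ e ∈ D.C.eset, (e ∩ D.P.vset).card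

/-- The number of edges of `E(P)` entirely contained in `V(P)`. -/
def contCount (D : DcpPair H) : ℕ := (D.P.eset.filter (fun e => e ⊆ D.P.vset)).card

/-- 1-good dcp-pair. -/
def Good1 (D : DcpPair H) : Prop := ∀ D' : DcpPair H, D'.C.vset.card ≤ D.C.vset.card

/-- 2-good dcp-pair: lexicographically maximizes `(|V(C)|, |V(P)|)`. -/
def Good2 (D : DcpPair H) : Prop :=
  D.Good1 ∧ ∀ D' : DcpPair H, D'.C.vset.card = D.C.vset.card →
    D'.P.vset.card ≤ D.P.vset.card

/-- 3-good dcp-pair. -/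
def Good3 (D : DcpPair H) : Prop :=
  D.Good2 ∧ ∀ D' : DcpPair H, D'.C.vset.card = D.C.vset.card →
    D'.P.vset.card = D.P.vset.card → D'.incCount ≤ D.incCount

/-- 4-good dcp-pair. -/
def Good4 (D : DcpPair H) : Prop :=
  D.Good3 ∧ ∀ D' : DcpPair H, D'.C.vset.card = D.C.vset.card →
    D'.P.vset.card = D.P.vset.card → D'.incCount = D.incCount →
    D'.contCount ≤ D.contCount

end DcpPair

/-- The `E'`-neighborhood of a vertex `x`: all vertices `w` such that some edge of `E'`
contains both `x` and `w`. -/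
def nbhd (E' : Finset (Finset α)) (x : α) : Finset α :=
  (E'.filter (fun e => x ∈ e)).biUnion id

theorem Nat.cast_add_cast_sub_of_le {R : Type*} [AddMonoidWithOne R] {i j : ℕ} (h : i ≤ j) :
    (i : R) + ((j - i : ℕ) : R) = j := by
  rw [← Nat.cast_add, Nat.add_sub_cancel' h]

theorem ZMod.natCast_inj_of_lt {c m n : ℕ} (hm : m < c) (hn : n < c)
    (h : (m : ZMod c) = n) : m = n := by
  rw [← ZMod.val_cast_of_lt hm, ← ZMod.val_cast_of_lt hn, h]

theorem Set.InjOn.ite_lt_sub {β : Type*} {x y : ℕ → β} {m n : ℕ}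
    (hx : Set.InjOn x (Set.Iio m)) (hy : Set.InjOn y (Set.Iio n))
    (hxy : ∀ p < m, ∀ q < n, x p ≠ y q) :
    Set.InjOn (fun p => if p < m then x p else y (p - m)) (Set.Iio (m + n)) := by
  intro p hp p' hp' h
  simp only [Set.mem_Iio] at hp hp'
  by_cases h₁ : p < m <;> by_cases h₂ : p' < m <;> simp only [h₁, h₂, if_true, if_false] at h
  · exact hx h₁ h₂ h
  · exact absurd h (hxy p h₁ _ (by omega))
  · exact absurd h.symm (hxy p' h₂ _ (by omega))
  · have : p - m = p' - m := hy (show p - m < n by omega) (show p' - m < n by omega) h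
    omega

namespace BHypergraph

theorem hasBergeCycle_of_closedWalk (H : BHypergraph α) {M : ℕ} (hM : 2 ≤ M)
    (x : ℕ → α) (g : ℕ → Finset α) (hx : Set.InjOn x (Set.Iio M))
    (hg : Set.InjOn g (Set.Iio M)) (hg_mem : ∀ p < M, g p ∈ H.edges)
    (hxg : ∀ p < M, x p ∈ g p) (hxg_succ : ∀ p, p + 1 < M → x (p + 1) ∈ g p)
    (hclose : x 0 ∈ g (M - 1)) :
    H.HasBergeCycle M := by
  have : NeZero M := ⟨by omega⟩
  refine ⟨hM, fun i => x i.val, fun i => g i.val,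
    fun i j h => ZMod.val_injective M (hx i.val_lt j.val_lt h),
    fun i j h => ZMod.val_injective M (hg i.val_lt j.val_lt h),
    fun i => hg_mem _ i.val_lt, fun i => hxg _ i.val_lt, fun i => ?_⟩
  have hsucc : (i + 1).val = (i.val + 1) % M := by
    rw [ZMod.val_add, ZMod.val_one_eq_one_mod, Nat.add_mod_mod]
  obtain hlt | heq : i.val + 1 < M ∨ i.val + 1 = M := by have := i.val_lt; omega
  · simpa only [hsucc, Nat.mod_eq_of_lt hlt] using hxg_succ _ hlt
  · change x (i + 1).val ∈ g i.val
    rw [hsucc, heq, Nat.mod_self]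
    rwa [show M - 1 = i.val by omega] at hclose

end BHypergraph

namespace BergePath

variable {H : BHypergraph α} {k ℓ : ℕ}

theorem mem_vset (T : BergePath H k) (p : Fin (k + 1)) : T.u p ∈ T.vset :=
  Finset.mem_image_of_mem _ (Finset.mem_univ p)

theorem mem_eset (T : BergePath H k) (p : Fin k) : T.f p ∈ T.eset :=
  Finset.mem_image_of_mem _ (Finset.mem_univ p)

theorem eset_subset_edges (T : BergePath H k) : T.eset ⊆ H.edges := by
  intro e he
  obtain ⟨p, -, rfl⟩ := Finset.mem_image.mp he
  exact T.f_mem p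

/-- With `detourEdges`, the walk `v₀, g₀, u_0, f_0, …, f_(k-1), u_k, g₁, v₁` indexed from `0`. -/
def detourVerts (T : BergePath H k) (v₀ v₁ : α) : ℕ → α
  | 0 => v₀
  | p + 1 => if h : p ≤ k then T.u ⟨p, by omega⟩ else v₁

def detourEdges (T : BergePath H k) (g₀ g₁ : Finset α) : ℕ → Finset α
  | 0 => g₀
  | p + 1 => if h : p < k then T.f ⟨p, h⟩ else g₁

section Detour

variable (T : BergePath H k) {v₀ v₁ : α} {g₀ g₁ : Finset α}

theorem detourVerts_mem_vset {p : ℕ} (hp0 : 0 < p) (hp : p < k + 2) :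
    T.detourVerts v₀ v₁ p ∈ T.vset := by
  obtain ⟨p, rfl⟩ := Nat.exists_eq_add_one_of_ne_zero hp0.ne'
  simp only [detourVerts, dif_pos (show p ≤ k by omega)]
  exact T.mem_vset _

theorem injOn_detourVerts (hv₀ : v₀ ∉ T.vset) :
    Set.InjOn (T.detourVerts v₀ v₁) (Set.Iio (k + 2)) := by
  rintro (_ | p) hp (_ | p') hp' h
  · rfl
  · have := T.detourVerts_mem_vset (v₀ := v₀) (v₁ := v₁) p'.succ_pos hp'
    rw [← h] at this
    exact absurd this hv₀
  · have := T.detourVerts_mem_vset (v₀ := v₀) (v₁ := v₁) p.succ_pos hp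
    rw [h] at this
    exact absurd this hv₀
  · simp only [Set.mem_Iio] at hp hp'
    simp only [detourVerts, dif_pos (show p ≤ k by omega), dif_pos (show p' ≤ k by omega)] at h
    simpa using T.u_inj h

theorem detourEdges_eq_or_mem_eset (p : ℕ) :
    T.detourEdges g₀ g₁ p = g₀ ∨ T.detourEdges g₀ g₁ p = g₁ ∨ T.detourEdges g₀ g₁ p ∈ T.eset := by
  rcases p with _ | p
  · exact Or.inl rfl
  · simp only [detourEdges]
    split_ifs
    exacts [Or.inr (Or.inr (T.mem_eset _)), Or.inr (Or.inl rfl)]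

theorem injOn_detourEdges (hg₀ : g₀ ∉ T.eset) (hg₁ : g₁ ∉ T.eset) (hne : g₀ ≠ g₁) :
    Set.InjOn (T.detourEdges g₀ g₁) (Set.Iio (k + 2)) := by
  rintro (_ | p) hp (_ | p') hp' h
  · rfl
  · simp only [detourEdges] at h
    split_ifs at h
    exacts [absurd (h ▸ T.mem_eset _) hg₀, absurd h hne]
  · simp only [detourEdges] at h
    split_ifs at h
    exacts [absurd (h ▸ T.mem_eset _) hg₀, absurd h.symm hne]
  · simp only [Set.mem_Iio] at hp hp'
    simp only [detourEdges] at h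
    split_ifs at h with h₁ h₂ h₂
    · simpa using T.f_inj h
    · exact absurd (h ▸ T.mem_eset _) hg₁
    · exact absurd (h ▸ T.mem_eset _) hg₁
    · omega

theorem detourVerts_mem_detourEdges (hv₀ : v₀ ∈ g₀) (hu₀ : T.u 0 ∈ g₀)
    (hu₁ : T.u (Fin.last k) ∈ g₁) (hv₁ : v₁ ∈ g₁) {p : ℕ} (hp : p < k + 2) :
    T.detourVerts v₀ v₁ p ∈ T.detourEdges g₀ g₁ p ∧
      T.detourVerts v₀ v₁ (p + 1) ∈ T.detourEdges g₀ g₁ p := by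
  rcases p with _ | p
  · exact ⟨hv₀, by simpa [detourVerts, detourEdges] using hu₀⟩
  simp only [detourVerts, detourEdges, dif_pos (show p ≤ k by omega)]
  by_cases hpk : p < k
  · simp only [dif_pos hpk, dif_pos (show p + 1 ≤ k by omega)]
    exact ⟨T.mem_cast ⟨p, hpk⟩, T.mem_succ ⟨p, hpk⟩⟩
  · simp only [dif_neg hpk, dif_neg (show ¬p + 1 ≤ k by omega)]
    refine ⟨?_, hv₁⟩
    convert hu₁ using 2
    exact Fin.ext (by simp; omega)

end Detour

def suffix (P : BergePath H ℓ) (q : ℕ) (hq : q ≤ ℓ) : BergePath H (ℓ - q) where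
  u p := P.u ⟨q + p, by omega⟩
  f p := P.f ⟨q + p, by omega⟩
  u_inj x y h := Fin.ext (by simpa using P.u_inj h)
  f_inj x y h := Fin.ext (by simpa using P.f_inj h)
  u_mem _ := P.u_mem _
  f_mem _ := P.f_mem _
  mem_cast p := P.mem_cast ⟨q + p, by omega⟩
  mem_succ p := P.mem_succ ⟨q + p, by omega⟩

section Suffix

variable (P : BergePath H ℓ) {q : ℕ} (hq : q ≤ ℓ)

theorem suffix_u_zero : (P.suffix q hq).u 0 = P.u ⟨q, by omega⟩ :=
  congrArg P.u (Fin.ext (by simp))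

theorem suffix_u_last : (P.suffix q hq).u (Fin.last _) = P.u (Fin.last ℓ) :=
  congrArg P.u (Fin.ext (by simp; omega))

theorem suffix_eset_subset : (P.suffix q hq).eset ⊆ P.eset := by
  intro e he
  obtain ⟨p, -, rfl⟩ := Finset.mem_image.mp he
  exact P.mem_eset _

theorem f_zero_notMem_suffix_eset (hq1 : 1 ≤ q) (hℓ : 0 < ℓ) :
    P.f ⟨0, hℓ⟩ ∉ (P.suffix q hq).eset := by
  intro h
  obtain ⟨p, -, hp⟩ := Finset.mem_image.mp h
  have : q + p = 0 := congrArg Fin.val (P.f_inj hp)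
  omega

end Suffix

end BergePath

namespace PartialBergePath

variable {H : BHypergraph α} {ℓ : ℕ}

/-- The Berge path `u_q, f_q, …, u_ℓ`, where `P.u ⟨m - 1, _⟩` is the vertex `u_m`. -/
def suffix (P : PartialBergePath H ℓ) (q : ℕ) (hq1 : 1 ≤ q) (hq : q ≤ ℓ) :
    BergePath H (ℓ - q) where
  u p := P.u ⟨q - 1 + p, by omega⟩
  f p := P.f ⟨q + p, by omega⟩
  u_inj x y h := Fin.ext (by simpa using P.u_inj h)
  f_inj x y h := Fin.ext (by simpa using P.f_inj h)
  u_mem _ := P.u_mem _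
  f_mem _ := P.f_mem _
  mem_cast p := by
    simpa [show q - 1 + p + 1 = q + p by omega] using P.mem_next (q - 1 + p) (by omega)
  mem_succ p := by
    simpa [show q - 1 + (p + 1) = q + p by omega] using P.mem_self ⟨q + p, by omega⟩

variable (P : PartialBergePath H ℓ) {q : ℕ} (hq1 : 1 ≤ q) (hq : q ≤ ℓ)

theorem suffix_u_zero : (P.suffix q hq1 hq).u 0 = P.u ⟨q - 1, by omega⟩ :=
  congrArg P.u (Fin.ext (by simp))

theorem suffix_u_last : (P.suffix q hq1 hq).u (Fin.last _) = P.u ⟨ℓ - 1, by omega⟩ :=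
  congrArg P.u (Fin.ext (by simp; omega))

theorem suffix_vset_subset : (P.suffix q hq1 hq).vset ⊆ P.vset := by
  intro x hx
  obtain ⟨p, -, rfl⟩ := Finset.mem_image.mp hx
  exact Finset.mem_image_of_mem _ (Finset.mem_univ _)

theorem suffix_eset_subset : (P.suffix q hq1 hq).eset ⊆ P.eset := by
  intro e he
  obtain ⟨p, -, rfl⟩ := Finset.mem_image.mp he
  exact Finset.mem_image_of_mem _ (Finset.mem_univ _)

theorem f_zero_notMem_suffix_eset : P.f ⟨0, by omega⟩ ∉ (P.suffix q hq1 hq).eset := by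
  intro h
  obtain ⟨p, -, hp⟩ := Finset.mem_image.mp h
  have : q + p = 0 := congrArg Fin.val (P.f_inj hp)
  omega

end PartialBergePath

namespace BergeCycle

variable {H : BHypergraph α} {c k : ℕ}

theorem neZero (C : BergeCycle H c) : NeZero c := ⟨by have := C.hc; omega⟩

theorem mem_vset (C : BergeCycle H c) (x : ZMod c) : C.v x ∈ C.vset := by
  have := C.neZero
  exact Finset.mem_image_of_mem _ (Finset.mem_univ x)

theorem mem_eset (C : BergeCycle H c) (x : ZMod c) : C.e x ∈ C.eset := by
  have := C.neZero
  exact Finset.mem_image_of_mem _ (Finset.mem_univ x)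

theorem v_add_inj (C : BergeCycle H c) (a : ZMod c) {m n : ℕ} (hm : m < c) (hn : n < c)
    (h : C.v (a + m) = C.v (a + n)) : m = n :=
  ZMod.natCast_inj_of_lt hm hn (add_left_cancel (C.v_inj h))

theorem e_add_inj (C : BergeCycle H c) (a : ZMod c) {m n : ℕ} (hm : m < c) (hn : n < c)
    (h : C.e (a + m) = C.e (a + n)) : m = n :=
  ZMod.natCast_inj_of_lt hm hn (add_left_cancel (C.e_inj h))

theorem v_add_succ_mem (C : BergeCycle H c) (a : ZMod c) (n : ℕ) :
    C.v (a + (n + 1 : ℕ)) ∈ C.e (a + n) := by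
  simpa only [Nat.cast_succ, add_assoc] using C.mem_succ (a + n)

theorem v_ne_v_add (C : BergeCycle H c) (a : ZMod c) {n : ℕ} (hn : 0 < n) (hnc : n < c) :
    C.v a ≠ C.v (a + n) := fun h => by
  have := C.v_add_inj a (m := 0) (by omega) hnc (by simpa using h)
  omega

theorem e_ne_e_add (C : BergeCycle H c) (a : ZMod c) {n : ℕ} (hn : 0 < n) (hnc : n < c) :
    C.e a ≠ C.e (a + n) := fun h => by
  have := C.e_add_inj a (m := 0) (by omega) hnc (by simpa using h)
  omega

theorem e_add_ne_e_add_succ_add (C : BergeCycle H c) (a : ZMod c) {n y : ℕ}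
    (hy : y < c - (n + 1)) : C.e (a + n) ≠ C.e (a + (n + 1 + y : ℕ)) := fun h => by
  have := C.e_add_inj a (by omega) (by omega) h
  omega

/-- `C` traversed backwards; `e_(-1-x)` is the edge joining `v_(-x)` and `v_(-x-1)`. -/
def reverse (C : BergeCycle H c) : BergeCycle H c where
  hc := C.hc
  v x := C.v (-x)
  e x := C.e (-1 - x)
  v_inj _ _ h := neg_injective (C.v_inj h)
  e_inj _ _ h := neg_injective (add_left_cancel (by simpa only [sub_eq_add_neg] using C.e_inj h))
  e_mem _ := C.e_mem _
  mem_self x := by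
    convert C.mem_succ (-1 - x) using 2
    ring
  mem_succ x := by
    convert C.mem_self (-1 - x) using 2
    ring

@[simp] theorem reverse_v (C : BergeCycle H c) (x : ZMod c) : C.reverse.v x = C.v (-x) := rfl

@[simp] theorem reverse_e (C : BergeCycle H c) (x : ZMod c) :
    C.reverse.e x = C.e (-1 - x) := rfl

theorem reverse_vset (C : BergeCycle H c) : C.reverse.vset = C.vset := by
  ext z
  simp only [vset, reverse, Finset.mem_image, Finset.mem_univ, true_and]
  exact ⟨fun ⟨x, hx⟩ => ⟨-x, hx⟩, fun ⟨x, hx⟩ => ⟨-x, by rwa [neg_neg]⟩⟩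

theorem reverse_eset (C : BergeCycle H c) : C.reverse.eset = C.eset := by
  ext z
  simp only [eset, reverse, Finset.mem_image, Finset.mem_univ, true_and]
  exact ⟨fun ⟨x, hx⟩ => ⟨-1 - x, hx⟩, fun ⟨x, hx⟩ => ⟨-1 - x, by rwa [sub_sub_cancel]⟩⟩

/-- The detour `x 0, g 0, x 1, …, g (m-1), x m` from `v_a` to `v_(a+d)`, followed by the arc
`v_(a+d), e_(a+d), …, e_(a+c-1), v_a` of `C`, is a Berge cycle. -/
theorem hasBergeCycle_splice (C : BergeCycle H c) (a : ZMod c) {d m : ℕ} (hd : 1 ≤ d)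
    (hdc : d ≤ c) (hm : 2 ≤ m) (x : ℕ → α) (g : ℕ → Finset α) (hx0 : x 0 = C.v a)
    (hxm : x m = C.v (a + d)) (hx : Set.InjOn x (Set.Iio m))
    (hx_off : ∀ p, 0 < p → p < m → x p ∉ C.vset) (hg : Set.InjOn g (Set.Iio m))
    (hg_mem : ∀ p < m, g p ∈ H.edges)
    (hg_arc : ∀ p < m, ∀ y < c - d, g p ≠ C.e (a + (d + y : ℕ)))
    (hxg : ∀ p < m, x p ∈ g p) (hxg_succ : ∀ p < m, x (p + 1) ∈ g p) :
    H.HasBergeCycle (m + (c - d)) := by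
  have hx_arc : ∀ p < m, ∀ y < c - d, x p ≠ C.v (a + (d + y : ℕ)) := by
    rintro (_ | p) hp y hy h
    · exact C.v_ne_v_add a (by omega) (by omega) (hx0 ▸ h)
    · exact hx_off _ p.succ_pos hp (h ▸ C.mem_vset _)
  have hcast_c : ((c : ℕ) : ZMod c) = 0 := ZMod.natCast_self c
  refine H.hasBergeCycle_of_closedWalk (by omega)
    (fun p => if p < m then x p else C.v (a + (d + (p - m) : ℕ)))
    (fun p => if p < m then g p else C.e (a + (d + (p - m) : ℕ))) ?_ ?_ ?_ ?_ ?_ ?_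
  · refine hx.ite_lt_sub (y := fun q => C.v (a + (d + q : ℕ))) (fun q hq q' hq' h => ?_) hx_arc
    rw [Set.mem_Iio] at hq hq'
    have := C.v_add_inj a (by omega) (by omega) h
    omega
  · refine hg.ite_lt_sub (y := fun q => C.e (a + (d + q : ℕ))) (fun q hq q' hq' h => ?_) hg_arc
    rw [Set.mem_Iio] at hq hq'
    have := C.e_add_inj a (by omega) (by omega) h
    omega
  · intro p _
    split_ifs with h
    exacts [hg_mem p h, C.e_mem _]
  · intro p _
    split_ifs with h
    exacts [hxg p h, C.mem_self _]
  · intro p hp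
    by_cases h1 : p + 1 < m
    · rw [if_pos h1, if_pos (show p < m by omega)]
      exact hxg_succ p (by omega)
    by_cases h2 : p + 1 = m
    · rw [if_neg h1, if_pos (show p < m by omega), h2, Nat.sub_self, Nat.add_zero, ← hxm, ← h2]
      exact hxg_succ p (by omega)
    · rw [if_neg h1, if_neg (show ¬p < m by omega),
        show d + (p + 1 - m) = d + (p - m) + 1 by omega]
      exact C.v_add_succ_mem a _
  · rw [if_pos (show 0 < m by omega), hx0]
    by_cases hcd : c - d = 0
    · rw [if_pos (show m + (c - d) - 1 < m by omega), hcd, Nat.add_zero]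
      have := hxg_succ (m - 1) (by omega)
      rwa [Nat.sub_add_cancel (by omega), hxm, show d = c by omega, hcast_c, add_zero] at this
    · rw [if_neg (show ¬m + (c - d) - 1 < m by omega)]
      have := C.v_add_succ_mem a (d + (m + (c - d) - 1 - m))
      rwa [show d + (m + (c - d) - 1 - m) + 1 = c by omega, hcast_c, add_zero] at this

theorem add_two_le_of_detour (C : BergeCycle H c) (hmax : ∀ n, H.HasBergeCycle n → n ≤ c)
    (T : BergePath H k) (hTv : Disjoint C.vset T.vset) (hTe : Disjoint C.eset T.eset)
    (a : ZMod c) {d : ℕ} (hd : 1 ≤ d) (hdc : d ≤ c) {g₀ g₁ : Finset α}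
    (hg₀ : g₀ ∈ H.edges \ T.eset) (hg₁ : g₁ ∈ H.edges \ T.eset) (hne : g₀ ≠ g₁)
    (hg₀_arc : ∀ y < c - d, g₀ ≠ C.e (a + (d + y : ℕ)))
    (hg₁_arc : ∀ y < c - d, g₁ ≠ C.e (a + (d + y : ℕ)))
    (hv₀ : C.v a ∈ g₀) (hu₀ : T.u 0 ∈ g₀) (hu₁ : T.u (Fin.last k) ∈ g₁)
    (hv₁ : C.v (a + d) ∈ g₁) : k + 2 ≤ d := by
  rw [Finset.mem_sdiff] at hg₀ hg₁
  have hlonger := C.hasBergeCycle_splice a hd hdc (m := k + 2) le_add_self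
    (T.detourVerts (C.v a) (C.v (a + d))) (T.detourEdges g₀ g₁) rfl
    (by simp [BergePath.detourVerts])
    (T.injOn_detourVerts (Finset.disjoint_left.mp hTv (C.mem_vset a)))
    (fun p hp0 hp hC => Finset.disjoint_left.mp hTv hC (T.detourVerts_mem_vset hp0 hp))
    (T.injOn_detourEdges hg₀.2 hg₁.2 hne)
    (fun p _ => by
      rcases T.detourEdges_eq_or_mem_eset (g₀ := g₀) (g₁ := g₁) p with h | h | h
      · rw [h]; exact hg₀.1
      · rw [h]; exact hg₁.1
      · exact T.eset_subset_edges h)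
    (fun p _ y hy hC => by
      rcases T.detourEdges_eq_or_mem_eset (g₀ := g₀) (g₁ := g₁) p with h | h | h
      · exact hg₀_arc y hy (h ▸ hC)
      · exact hg₁_arc y hy (h ▸ hC)
      · exact Finset.disjoint_left.mp hTe (hC ▸ C.mem_eset _) h)
    (fun p hp => (T.detourVerts_mem_detourEdges hv₀ hu₀ hu₁ hv₁ hp).1)
    (fun p hp => (T.detourVerts_mem_detourEdges hv₀ hu₀ hu₁ hv₁ hp).2)
  have := hmax _ hlonger
  omega

theorem ne_e_of_mem_free (C : BergeCycle H c) {T : BergePath H k} {e : Finset α}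
    (he : e ∈ H.edges \ (C.eset ∪ T.eset)) (x : ZMod c) : e ≠ C.e x :=
  fun h => (Finset.mem_sdiff.mp he).2 (Finset.mem_union_left _ (h ▸ C.mem_eset x))

theorem mem_edges_sdiff_of_mem_free {C : BergeCycle H c} {T : BergePath H k} {e : Finset α}
    (he : e ∈ H.edges \ (C.eset ∪ T.eset)) : e ∈ H.edges \ T.eset :=
  Finset.sdiff_subset_sdiff le_rfl Finset.subset_union_right he

theorem add_one_le_of_mem_e_of_mem_e (C : BergeCycle H c)
    (hmax : ∀ n, H.HasBergeCycle n → n ≤ c) (T : BergePath H k)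
    (hTv : Disjoint C.vset T.vset) (hTe : Disjoint C.eset T.eset) (a : ZMod c) {n : ℕ}
    (hn : 0 < n) (hnc : n < c) (hu₀ : T.u 0 ∈ C.e a) (hu₁ : T.u (Fin.last k) ∈ C.e (a + n)) :
    k + 1 ≤ n := by
  -- The detour `v_a, e_a, T, e_(a+n), v_(a+n+1)` replaces the arc from `v_a` to `v_(a+n+1)`.
  have hCT : ∀ x, C.e x ∈ H.edges \ T.eset := fun x =>
    Finset.mem_sdiff.mpr ⟨C.e_mem x, Finset.disjoint_left.mp hTe (C.mem_eset x)⟩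
  have := C.add_two_le_of_detour hmax T hTv hTe a (d := n + 1) (by omega) hnc (hCT a) (hCT _)
    (C.e_ne_e_add a hn hnc) (fun _ _ => C.e_ne_e_add a (by omega) (by omega))
    (fun y hy => C.e_add_ne_e_add_succ_add a hy) (C.mem_self a) hu₀ hu₁ (C.v_add_succ_mem a n)
  omega

theorem add_one_le_of_mem_free_of_mem_e (C : BergeCycle H c)
    (hmax : ∀ n, H.HasBergeCycle n → n ≤ c) (T : BergePath H k)
    (hTv : Disjoint C.vset T.vset) (hTe : Disjoint C.eset T.eset) (a : ZMod c) {n : ℕ}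
    (hnc : n < c) {e : Finset α} (he : e ∈ H.edges \ (C.eset ∪ T.eset)) (hv₀ : C.v a ∈ e)
    (hu₀ : T.u 0 ∈ e) (hu₁ : T.u (Fin.last k) ∈ C.e (a + n)) :
    k + 1 ≤ n := by
  have := C.add_two_le_of_detour hmax T hTv hTe a (d := n + 1) (by omega) hnc
    (mem_edges_sdiff_of_mem_free he)
    (Finset.mem_sdiff.mpr ⟨C.e_mem _, Finset.disjoint_left.mp hTe (C.mem_eset _)⟩)
    (C.ne_e_of_mem_free he _) (fun _ _ => C.ne_e_of_mem_free he _)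
    (fun y hy => C.e_add_ne_e_add_succ_add a hy) hv₀ hu₀ hu₁ (C.v_add_succ_mem a n)
  omega

theorem add_two_le_of_mem_free_of_mem_free (C : BergeCycle H c)
    (hmax : ∀ n, H.HasBergeCycle n → n ≤ c) (T : BergePath H k)
    (hTv : Disjoint C.vset T.vset) (hTe : Disjoint C.eset T.eset) (a : ZMod c) {d : ℕ}
    (hd : 1 ≤ d) (hdc : d ≤ c) {e f : Finset α} (he : e ∈ H.edges \ (C.eset ∪ T.eset))
    (hf : f ∈ H.edges \ (C.eset ∪ T.eset)) (hef : e ≠ f) (hv₀ : C.v a ∈ e) (hu₀ : T.u 0 ∈ e)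
    (hu₁ : T.u (Fin.last k) ∈ f) (hv₁ : C.v (a + d) ∈ f) :
    k + 2 ≤ d :=
  C.add_two_le_of_detour hmax T hTv hTe a hd hdc (mem_edges_sdiff_of_mem_free he)
    (mem_edges_sdiff_of_mem_free hf) hef (fun _ _ => C.ne_e_of_mem_free he _)
    (fun _ _ => C.ne_e_of_mem_free hf _) hv₀ hu₀ hu₁ hv₁

theorem eq_or_add_one_le_dist_of_mem_e (C : BergeCycle H c)
    (hmax : ∀ n, H.HasBergeCycle n → n ≤ c) (T : BergePath H k)
    (hTv : Disjoint C.vset T.vset) (hTe : Disjoint C.eset T.eset) {i j : ℕ} (hi : 1 ≤ i)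
    (hic : i ≤ c) (hj : 1 ≤ j) (hjc : j ≤ c) (hu₀ : T.u 0 ∈ C.e i)
    (hu₁ : T.u (Fin.last k) ∈ C.e j) : j = i ∨ k + 1 ≤ Nat.dist j i := by
  rcases lt_trichotomy i j with hij | rfl | hij
  · have := C.add_one_le_of_mem_e_of_mem_e hmax T hTv hTe i (n := j - i) (by omega) (by omega)
      hu₀ (by rwa [Nat.cast_add_cast_sub_of_le hij.le])
    right; unfold Nat.dist; omega
  · exact Or.inl rfl
  · have := C.reverse.add_one_le_of_mem_e_of_mem_e hmax T (C.reverse_vset ▸ hTv)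
      (C.reverse_eset ▸ hTe) (-1 - i) (n := i - j) (by omega) (by omega)
      (by rwa [reverse_e, sub_sub_cancel])
      (by rw [reverse_e]; convert hu₁ using 2; push_cast [Nat.cast_sub hij.le]; ring)
    right; unfold Nat.dist; omega

theorem add_one_le_sub_of_mem_free_of_mem_e (C : BergeCycle H c)
    (hmax : ∀ n, H.HasBergeCycle n → n ≤ c) (T : BergePath H k)
    (hTv : Disjoint C.vset T.vset) (hTe : Disjoint C.eset T.eset) {i j : ℕ} (hi : 1 ≤ i)
    (hic : i ≤ c) (hj : 1 ≤ j) (hjc : j ≤ c) {e : Finset α}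
    (he : e ∈ H.edges \ (C.eset ∪ T.eset)) (hv₀ : C.v i ∈ e) (hu₀ : T.u 0 ∈ e)
    (hu₁ : T.u (Fin.last k) ∈ C.e j) :
    (i < j ∧ k + 1 ≤ j - i) ∨ (j < i ∧ k + 2 ≤ i - j) := by
  rcases lt_trichotomy i j with hij | rfl | hij
  · have := C.add_one_le_of_mem_free_of_mem_e hmax T hTv hTe i (n := j - i) (by omega) he
      hv₀ hu₀ (by rwa [Nat.cast_add_cast_sub_of_le hij.le])
    omega
  · have := C.add_one_le_of_mem_free_of_mem_e hmax T hTv hTe i (n := 0) (by omega) he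
      hv₀ hu₀ (by rwa [Nat.cast_zero, add_zero])
    omega
  · have := C.reverse.add_one_le_of_mem_free_of_mem_e hmax T (C.reverse_vset ▸ hTv)
      (C.reverse_eset ▸ hTe) (-i) (n := i - j - 1) (by omega) (C.reverse_eset ▸ he)
      (by rwa [reverse_v, neg_neg]) hu₀
      (by
        rw [reverse_e]
        convert hu₁ using 2
        push_cast [Nat.cast_sub (show 1 ≤ i - j by omega), Nat.cast_sub hij.le]
        ring)
    omega

theorem eq_or_add_two_le_dist_of_mem_free (C : BergeCycle H c)
    (hmax : ∀ n, H.HasBergeCycle n → n ≤ c) (T : BergePath H k)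
    (hTv : Disjoint C.vset T.vset) (hTe : Disjoint C.eset T.eset) {i j : ℕ} (hi : 1 ≤ i)
    (hic : i ≤ c) (hj : 1 ≤ j) (hjc : j ≤ c) {e f : Finset α}
    (he : e ∈ H.edges \ (C.eset ∪ T.eset)) (hf : f ∈ H.edges \ (C.eset ∪ T.eset))
    (hef : e ≠ f) (hv₀ : C.v i ∈ e) (hu₀ : T.u 0 ∈ e) (hv₁ : C.v j ∈ f)
    (hu₁ : T.u (Fin.last k) ∈ f) : j = i ∨ k + 2 ≤ Nat.dist j i := by
  rcases lt_trichotomy i j with hij | rfl | hij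
  · have := C.add_two_le_of_mem_free_of_mem_free hmax T hTv hTe i (d := j - i) (by omega)
      (by omega) he hf hef hv₀ hu₀ hu₁ (by rwa [Nat.cast_add_cast_sub_of_le hij.le])
    right; unfold Nat.dist; omega
  · exact Or.inl rfl
  · have := C.reverse.add_two_le_of_mem_free_of_mem_free hmax T (C.reverse_vset ▸ hTv)
      (C.reverse_eset ▸ hTe) (-i) (d := i - j) (by omega) (by omega) (C.reverse_eset ▸ he)
      (C.reverse_eset ▸ hf) hef (by rwa [reverse_v, neg_neg]) hu₀ hu₁
      (by rw [reverse_v]; convert hv₁ using 2; push_cast [Nat.cast_sub hij.le]; ring)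
    right; unfold Nat.dist; omega

theorem tail_attachment_bounds (C : BergeCycle H c)
    (hmax : ∀ n, H.HasBergeCycle n → n ≤ c) (T : BergePath H k)
    (hTv : Disjoint C.vset T.vset) (hTe : Disjoint C.eset T.eset) {F : Finset (Finset α)}
    (hF : F ⊆ H.edges \ (C.eset ∪ T.eset)) {i j : ℕ} (hi : 1 ≤ i) (hic : i ≤ c)
    (hj : 1 ≤ j) (hjc : j ≤ c) :
    (T.u 0 ∈ C.e (i : ZMod c) → T.u (Fin.last k) ∈ C.e (j : ZMod c) →
      j = i ∨ k + 1 ≤ Nat.dist j i) ∧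
    (∀ e ∈ F, C.v (i : ZMod c) ∈ e → T.u 0 ∈ e → T.u (Fin.last k) ∈ C.e (j : ZMod c) →
      (i < j ∧ k + 1 ≤ j - i) ∨ (j < i ∧ k + 2 ≤ i - j)) ∧
    (∀ e ∈ F, ∀ f ∈ F, e ≠ f → C.v (i : ZMod c) ∈ e → T.u 0 ∈ e →
      C.v (j : ZMod c) ∈ f → T.u (Fin.last k) ∈ f → j = i ∨ k + 2 ≤ Nat.dist j i) :=
  ⟨C.eq_or_add_one_le_dist_of_mem_e hmax T hTv hTe hi hic hj hjc,
    fun _ he => C.add_one_le_sub_of_mem_free_of_mem_e hmax T hTv hTe hi hic hj hjc (hF he),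
    fun _ he _ hf => C.eq_or_add_two_le_dist_of_mem_free hmax T hTv hTe hi hic hj hjc (hF he)
      (hF hf)⟩

end BergeCycle

theorem union_singleton_sdiff_subset_sdiff_union {β : Type*} [DecidableEq β]
    {E A B B' : Finset β} {f₀ : β} (hB' : B' ⊆ B) (hf₀ : f₀ ∈ E) (hf₀B' : f₀ ∉ B') :
    ((E \ (A ∪ B)) ∪ {f₀}) \ A ⊆ E \ (A ∪ B') := by
  intro e he
  simp only [Finset.mem_sdiff, Finset.mem_union, Finset.mem_singleton, not_or] at he ⊢
  obtain ⟨⟨he₁, -, heB⟩ | rfl, heA⟩ := he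
  · exact ⟨he₁, heA, fun h => heB (hB' h)⟩
  · exact ⟨hf₀, heA, hf₀B'⟩

namespace OLollipop

variable {H : BHypergraph α} {c ℓ : ℕ} (L : OLollipop H c ℓ) {q : ℕ} (hq : q ≤ ℓ)

theorem disjoint_vset_suffix (hq1 : 1 ≤ q) : Disjoint L.C.vset (L.P.suffix q hq).vset := by
  refine Finset.disjoint_left.mpr fun z hzC hzT => ?_
  obtain ⟨p, -, rfl⟩ := Finset.mem_image.mp hzT
  have h : L.P.u ⟨q + p, _⟩ ∈ L.C.vset ∩ L.P.vset := Finset.mem_inter.mpr ⟨hzC, L.P.mem_vset _⟩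
  rw [L.inter_v, Finset.mem_singleton] at h
  have : q + p = 0 := congrArg Fin.val (L.P.u_inj h)
  omega

theorem disjoint_eset_suffix : Disjoint L.C.eset (L.P.suffix q hq).eset :=
  Finset.disjoint_of_subset_right (L.P.suffix_eset_subset hq)
    (Finset.disjoint_iff_inter_eq_empty.mpr L.inter_e)

end OLollipop

namespace PLollipop

variable {H : BHypergraph α} {c ℓ : ℕ} (L : PLollipop H c ℓ) {q : ℕ} (hq1 : 1 ≤ q) (hq : q ≤ ℓ)

theorem disjoint_vset_suffix : Disjoint L.C.vset (L.P.suffix q hq1 hq).vset :=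
  Finset.disjoint_of_subset_right (L.P.suffix_vset_subset hq1 hq)
    (Finset.disjoint_iff_inter_eq_empty.mpr L.inter_v)

theorem disjoint_eset_suffix : Disjoint L.C.eset (L.P.suffix q hq1 hq).eset := by
  refine Finset.disjoint_left.mpr fun e heC heT => L.P.f_zero_notMem_suffix_eset hq1 hq ?_
  have h : e ∈ L.C.eset ∩ L.P.eset :=
    Finset.mem_inter.mpr ⟨heC, L.P.suffix_eset_subset hq1 hq heT⟩
  rw [L.inter_e, Finset.mem_singleton] at h
  rwa [h] at heT

end PLollipop

theorem statement15 {α : Type*} [DecidableEq α]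
    (H : BHypergraph α) :
    (∀ (c ℓ : ℕ) (L : OLollipop H c ℓ),
      (∀ m, H.HasBergeCycle m → m ≤ c) →
      ∀ (q i j : ℕ) (_hq1 : 1 ≤ q) (_hq2 : q + 1 ≤ ℓ)
        (_hi1 : 1 ≤ i) (_hi2 : i ≤ c) (_hj1 : 1 ≤ j) (_hj2 : j ≤ c),
        ((L.P.u ⟨q, by omega⟩ ∈ L.C.e (i : ZMod c) →
          L.P.u (Fin.last ℓ) ∈ L.C.e (j : ZMod c) →
          j = i ∨ ℓ - q + 1 ≤ Nat.dist j i) ∧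
        (∀ e ∈ ((H.edges \ (L.C.eset ∪ L.P.eset)) ∪ {L.P.f ⟨0, by omega⟩}) \ L.C.eset,
          L.C.v (i : ZMod c) ∈ e → L.P.u ⟨q, by omega⟩ ∈ e →
          L.P.u (Fin.last ℓ) ∈ L.C.e (j : ZMod c) →
          (i < j ∧ ℓ - q + 1 ≤ j - i) ∨ (j < i ∧ ℓ - q + 2 ≤ i - j)) ∧
        (∀ e ∈ ((H.edges \ (L.C.eset ∪ L.P.eset)) ∪ {L.P.f ⟨0, by omega⟩}) \ L.C.eset,
         ∀ f ∈ ((H.edges \ (L.C.eset ∪ L.P.eset)) ∪ {L.P.f ⟨0, by omega⟩}) \ L.C.eset,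
          e ≠ f →
          L.C.v (i : ZMod c) ∈ e → L.P.u ⟨q, by omega⟩ ∈ e →
          L.C.v (j : ZMod c) ∈ f → L.P.u (Fin.last ℓ) ∈ f →
          j = i ∨ ℓ - q + 2 ≤ Nat.dist j i))) ∧
    (∀ (c ℓ : ℕ) (L : PLollipop H c ℓ),
      (∀ m, H.HasBergeCycle m → m ≤ c) →
      ∀ (q i j : ℕ) (_hq1 : 1 ≤ q) (_hq2 : q + 1 ≤ ℓ)
        (_hi1 : 1 ≤ i) (_hi2 : i ≤ c) (_hj1 : 1 ≤ j) (_hj2 : j ≤ c),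
        ((L.P.u ⟨q - 1, by omega⟩ ∈ L.C.e (i : ZMod c) →
          L.P.u ⟨ℓ - 1, by omega⟩ ∈ L.C.e (j : ZMod c) →
          j = i ∨ ℓ - q + 1 ≤ Nat.dist j i) ∧
        (∀ e ∈ ((H.edges \ (L.C.eset ∪ L.P.eset)) ∪ {L.P.f ⟨0, by omega⟩}) \ L.C.eset,
          L.C.v (i : ZMod c) ∈ e → L.P.u ⟨q - 1, by omega⟩ ∈ e →
          L.P.u ⟨ℓ - 1, by omega⟩ ∈ L.C.e (j : ZMod c) →
          (i < j ∧ ℓ - q + 1 ≤ j - i) ∨ (j < i ∧ ℓ - q + 2 ≤ i - j)) ∧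
        (∀ e ∈ ((H.edges \ (L.C.eset ∪ L.P.eset)) ∪ {L.P.f ⟨0, by omega⟩}) \ L.C.eset,
         ∀ f ∈ ((H.edges \ (L.C.eset ∪ L.P.eset)) ∪ {L.P.f ⟨0, by omega⟩}) \ L.C.eset,
          e ≠ f →
          L.C.v (i : ZMod c) ∈ e → L.P.u ⟨q - 1, by omega⟩ ∈ e →
          L.C.v (j : ZMod c) ∈ f → L.P.u ⟨ℓ - 1, by omega⟩ ∈ f →
          j = i ∨ ℓ - q + 2 ≤ Nat.dist j i))) := by
  constructor
  · intro c ℓ L hmax q i j hq1 hq2 hi1 hi2 hj1 hj2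
    have hq : q ≤ ℓ := by omega
    have := L.C.tail_attachment_bounds hmax (L.P.suffix q hq) (L.disjoint_vset_suffix hq hq1)
      (L.disjoint_eset_suffix hq) (union_singleton_sdiff_subset_sdiff_union
        (L.P.suffix_eset_subset hq) (L.P.f_mem _) (L.P.f_zero_notMem_suffix_eset hq hq1 (by omega)))
      hi1 hi2 hj1 hj2
    rwa [L.P.suffix_u_zero, L.P.suffix_u_last] at this
  · intro c ℓ L hmax q i j hq1 hq2 hi1 hi2 hj1 hj2
    have hq : q ≤ ℓ := by omega
    have := L.C.tail_attachment_bounds hmax (L.P.suffix q hq1 hq) (L.disjoint_vset_suffix hq1 hq)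
      (L.disjoint_eset_suffix hq1 hq) (union_singleton_sdiff_subset_sdiff_union
        (L.P.suffix_eset_subset hq1 hq) (L.P.f_mem _) (L.P.f_zero_notMem_suffix_eset hq1 hq))
      hi1 hi2 hj1 hj2
    rwa [L.P.suffix_u_zero, L.P.suffix_u_last] at this
end
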